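/- arXiv:2007.00863 — 5 statements merged into one kernel-verified Lean document; each statement's English description precedes it below -/
import Mathlib

section
/- Let ν be a real-valued function defined on (at least) all open subsets of ℝⁿ which is finite, nonnegative, nondecreasing (ν(U) ≤ ν(V) whenever U ⊆ V are open) and countably superadditive (ν(⋃ⱼ Uⱼ) ≥ Σⱼ ν(Uⱼ) for every countable disjoint family of open sets Uⱼ). Let τ ≥ 0 and set S := { x ∈ ℝⁿ : limsup_{ρ→0⁺} ρ^{−τ} ν(B(x,ρ)) = ∞ }. Then H^τ(S) = 0; in particular the Hausdorff dimension of S is at most τ. -/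
open MeasureTheory Metric Set Filter
open scoped ENNReal NNReal Topology

noncomputable section

abbrev Euc (n : ℕ) := EuclideanSpace ℝ (Fin n)

variable {n : ℕ}

/-- Distance to the boundary of `Ω`. -/
def dB (Ω : Set (Euc n)) (x : Euc n) : ℝ := infDist x (frontier Ω)

/-- `Ψ(x) = B(x, d(x)/2)`. -/
def PsiB (Ω : Set (Euc n)) (x : Euc n) : Set (Euc n) := ball x (dB Ω x / 2)

/-- `Φ(x) = B(x, d(x)/6)`. -/
def PhiB (Ω : Set (Euc n)) (x : Euc n) : Set (Euc n) := ball x (dB Ω x / 6)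

/-- The integrand of `ν(·;u)`. -/
def nuInt (Ω : Set (Euc n)) (s : Euc n → ℝ) (p : ℝ) (u : Euc n → ℝ) (x : Euc n) : ℝ :=
  (⨍ y in PsiB Ω x, |u y - u x|) ^ p * dB Ω x ^ (-(p * s x))

/-- `ν(E;u)`. -/
def nuM (Ω : Set (Euc n)) (s : Euc n → ℝ) (p : ℝ) (u : Euc n → ℝ) (E : Set (Euc n)) : ℝ :=
  ∫ x in Ω ∩ E, nuInt Ω s p u x

/-- Membership in the nonlocal space `𝒩^{s,p}(Ω)`: `u ∈ L¹(Ω)` and `ν(Ω;u) < ∞`. -/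
def MemN (Ω : Set (Euc n)) (s : Euc n → ℝ) (p : ℝ) (u : Euc n → ℝ) : Prop :=
  IntegrableOn u Ω volume ∧ IntegrableOn (nuInt Ω s p u) Ω volume

/-- `g(x;u)`, the mean of `u` over `Φ(x)`. -/
def gFun (Ω : Set (Euc n)) (u : Euc n → ℝ) (x : Euc n) : ℝ := ⨍ y in PhiB Ω x, u y

/-- The approach region `Q^θ_λ(xb)`. -/
def Qreg (Ω : Set (Euc n)) (lam θ : ℝ) (xb : Euc n) : Set (Euc n) :=
  {x | x ∈ Ω ∧ (lam * dist xb x) ^ θ < dB Ω x}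

/-- `Q` is an `(η,θ)`-corkscrew region for `xb` with radius `δ₀`. -/
def IsCorkscrew (Ω Q : Set (Euc n)) (xb : Euc n) (η θ δ₀ : ℝ) : Prop :=
  ∀ δ : ℝ, 0 < δ → δ ≤ δ₀ →
    ∃ x ∈ Q, η * δ < dist xb x ∧ dist xb x < δ ∧ (η * δ) ^ θ < dB Ω x

/-- `E` is `(C,θ)`-connected to `xb`, with radius `ρ₀` and gauge `ε`. -/
def ConnectedTo (Ω E : Set (Euc n)) (xb : Euc n) (C θ ρ₀ : ℝ) (ε : ℝ → ℝ) : Prop :=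
  ∀ lam : ℝ, 0 < lam → lam < 1 →
    0 < ε lam ∧ ε lam ≤ lam ∧
      ∀ ρ : ℝ, 0 < ρ → ρ ≤ ρ₀ → ∀ x ∈ E ∩ ball xb ρ, ∀ x' ∈ E ∩ ball xb ρ,
        (lam * ρ) ^ θ ≤ dB Ω x → (lam * ρ) ^ θ ≤ dB Ω x' →
        ∃ γ : ℝ → Euc n, ContinuousOn γ (Icc 0 1) ∧ γ 0 = x ∧ γ 1 = x' ∧
          (∀ τ ∈ Icc (0:ℝ) 1, γ τ ∈ E ∧ ε lam * ρ ^ θ ≤ dB Ω (γ τ)) ∧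
          eVariationOn γ (Icc 0 1) ≤ ENNReal.ofReal (C * ρ)

/-- The piecewise bilinear function `α(s,θ)`. -/
def alphaFun (n : ℕ) (p sv θ : ℝ) : ℝ :=
  if p * sv - n ≤ p - 1 then p * (1 - θ) + (p * sv - n) * θ
  else (1 - θ) + (p * sv - n)

/-- `s̲_δ(xb)`. -/
def sLow (Ω : Set (Euc n)) (s : Euc n → ℝ) (xb : Euc n) (δ : ℝ) : ℝ :=
  sInf (s '' (Ω ∩ ball xb δ))

/-- `α̲_δ(xb)`. -/
def alphaLow (Ω : Set (Euc n)) (s : Euc n → ℝ) (p : ℝ) (θΓ : Euc n → ℝ)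
    (xb : Euc n) (δ : ℝ) : ℝ :=
  alphaFun n p (sLow Ω s xb δ) (θΓ xb)

/-- `α̲_0(xb) = lim_{δ → 0⁺} α̲_δ(xb)`. -/
def alphaLow0 (Ω : Set (Euc n)) (s : Euc n → ℝ) (p : ℝ) (θΓ : Euc n → ℝ) (xb : Euc n) : ℝ :=
  limUnder (𝓝[>] (0:ℝ)) (fun δ => alphaLow Ω s p θΓ xb δ)

/-- `Γ_τ`: points of `Γ` where `limsup_{ρ→0⁺} ρ^{-τ} ν(B(xb,ρ);u) < ∞`. -/
def GammaTau (Ω : Set (Euc n)) (s : Euc n → ℝ) (p : ℝ) (u : Euc n → ℝ)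
    (Γ : Set (Euc n)) (τ : ℝ) : Set (Euc n) :=
  {xb ∈ Γ | ∃ M : ℝ, ∀ᶠ ρ in 𝓝[>] (0:ℝ), ρ ^ (-τ) * nuM Ω s p u (ball xb ρ) ≤ M}

/-- `M_τ(xb) = sup_{0<ρ≤δΓ} ρ^{-τ} ν(B(xb,ρ);u)`. -/
def Mtau (Ω : Set (Euc n)) (s : Euc n → ℝ) (p : ℝ) (u : Euc n → ℝ)
    (δΓ τ : ℝ) (xb : Euc n) : ℝ :=
  sSup ((fun ρ => ρ ^ (-τ) * nuM Ω s p u (ball xb ρ)) '' Ioc 0 δΓ)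

/-!
Fix `M > 0` and `δ > 0`. Every point of `S` is the center of a ball `B(x, r)` with `r ≤ δ` and
`ν(B(x, r)) > M r^τ`. By the Vitali covering lemma a countable disjoint subfamily of these balls
has 5-fold enlargements covering `S`; superadditivity and monotonicity of `ν` then give
`∑ (diam 5B)^τ ≤ 10^τ ∑ r^τ ≤ 10^τ ν(ℝⁿ) / M`. Letting `δ → 0` yields `H^τ(S) ≤ 10^τ ν(ℝⁿ) / M`,
and letting `M → ∞` yields `H^τ(S) = 0`.
-/

section

variable {X : Type*} [MetricSpace X]

def infiniteUpperDensitySet (ν : Set X → ℝ) (τ : ℝ) : Set X :=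
  {x | ∀ M : ℝ, ∃ᶠ ρ in 𝓝[>] (0:ℝ), M < ρ ^ (-τ) * ν (ball x ρ)}

def CountablySuperadditiveOnOpens (ν : Set X → ℝ) : Prop :=
  ∀ U : ℕ → Set X, (∀ j, IsOpen (U j)) → Pairwise (Function.onFun Disjoint U) →
    ∀ N : ℕ, ∑ j ∈ Finset.range N, ν (U j) ≤ ν (⋃ j, U j)

theorem CountablySuperadditiveOnOpens.sum_le_iUnion {ν : Set X → ℝ}
    (hsuper : CountablySuperadditiveOnOpens ν) {ι : Type*} [Fintype ι] {f : ι → Set X}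
    (hf : ∀ i, IsOpen (f i)) (hdisj : Pairwise (Function.onFun Disjoint f)) :
    ∑ i, ν (f i) ≤ ν (⋃ i, f i) := by
  let e := Fintype.equivFin ι
  let U : ℕ → Set X := fun j => ⋃ (i) (_ : (e i : ℕ) = j), f i
  have hU : ∀ i, U (e i) = f i := fun i => by
    simp [U, Fin.val_inj, e.injective.eq_iff]
  have hUopen : ∀ j, IsOpen (U j) := fun j => isOpen_iUnion fun i => isOpen_iUnion fun _ => hf i
  have hUdisj : Pairwise (Function.onFun Disjoint U) := by
    intro j k hjk
    simp only [Function.onFun, U, disjoint_iUnion_left, disjoint_iUnion_right]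
    rintro i rfl i' rfl
    exact hdisj fun h => hjk (h ▸ rfl)
  have hUnion : ⋃ j, U j = ⋃ i, f i := by
    simp [U, iUnion_comm (ι := ℕ)]
  calc ∑ i, ν (f i) = ∑ j ∈ Finset.range (Fintype.card ι), ν (U j) := by
        rw [← Fin.sum_univ_eq_sum_range (fun j => ν (U j)), ← e.sum_comp]
        simp only [hU]
    _ ≤ ν (⋃ i, f i) := hUnion ▸ hsuper U hUopen hUdisj _

theorem tsum_ofReal_apply_ball_le {ν : Set X → ℝ} (hsuper : CountablySuperadditiveOnOpens ν)
    (hmono : MonotoneOn ν {U | IsOpen U}) {u : Set X} {r : X → ℝ}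
    (hdisj : u.PairwiseDisjoint fun b => ball b (r b)) (hnonneg : ∀ b ∈ u, 0 ≤ ν (ball b (r b))) :
    ∑' b : u, ENNReal.ofReal (ν (ball b (r b))) ≤ ENNReal.ofReal (ν univ) := by
  rw [ENNReal.tsum_eq_iSup_sum]
  refine iSup_le fun s => ?_
  rw [← ENNReal.ofReal_sum_of_nonneg fun (b : u) _ => hnonneg b b.2]
  refine ENNReal.ofReal_le_ofReal ?_
  calc ∑ b ∈ s, ν (ball (b : X) (r b))
      = ∑ b : s, ν (ball (b : X) (r b)) := (Finset.sum_coe_sort s _).symm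
    _ ≤ ν (⋃ b : s, ball (b : X) (r b)) :=
        hsuper.sum_le_iUnion (fun _ => isOpen_ball) fun b c hbc =>
          hdisj b.1.2 c.1.2 fun h => hbc (Subtype.ext (Subtype.ext h))
    _ ≤ ν univ := hmono (isOpen_iUnion fun _ => isOpen_ball) isOpen_univ (subset_univ _)

theorem ediam_closedBall_le_ofReal (x : X) (r : ℝ) :
    ediam (closedBall x r) ≤ ENNReal.ofReal (2 * r) :=
  ediam_le_of_forall_dist_le fun y hy z hz =>
    (dist_triangle_right y z x).trans (by linarith [mem_closedBall.1 hy, mem_closedBall.1 hz])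

theorem ediam_closedBall_rpow_le {τ M r a : ℝ} (x : X) (hτ : 0 ≤ τ) (hM : 0 < M) (hr : 0 < r)
    (ha : M * r ^ τ < a) :
    ediam (closedBall x (5 * r)) ^ τ ≤ ENNReal.ofReal (10 ^ τ / M) * ENNReal.ofReal a := by
  have hrτ : r ^ τ ≤ a / M := by rw [le_div_iff₀ hM]; linarith
  rw [← ENNReal.ofReal_mul (by positivity)]
  calc ediam (closedBall x (5 * r)) ^ τ ≤ ENNReal.ofReal (10 * r) ^ τ := by
        refine ENNReal.rpow_le_rpow ((ediam_closedBall_le_ofReal x _).trans_eq ?_) hτ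
        ring_nf
    _ = ENNReal.ofReal (10 ^ τ * r ^ τ) := by
        rw [ENNReal.ofReal_rpow_of_pos (by positivity), Real.mul_rpow (by norm_num) hr.le]
    _ ≤ ENNReal.ofReal (10 ^ τ / M * a) := by
        refine ENNReal.ofReal_le_ofReal ?_
        calc 10 ^ τ * r ^ τ ≤ 10 ^ τ * (a / M) := by gcongr
          _ = 10 ^ τ / M * a := by ring

theorem exists_lt_apply_ball_of_mem_infiniteUpperDensitySet {ν : Set X → ℝ} {τ : ℝ} {x : X}
    (hx : x ∈ infiniteUpperDensitySet ν τ) (M : ℝ) {δ : ℝ} (hδ : 0 < δ) :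
    ∃ ρ ∈ Ioc 0 δ, M * ρ ^ τ < ν (ball x ρ) := by
  obtain ⟨ρ, hM, hρ⟩ := ((hx M).and_eventually (Ioc_mem_nhdsGT hδ)).exists
  refine ⟨ρ, hρ, ?_⟩
  rwa [Real.rpow_neg hρ.1.le, inv_mul_eq_div, lt_div_iff₀ (Real.rpow_pos_of_pos hρ.1 τ)] at hM

theorem exists_countable_disjoint_balls_covering [TopologicalSpace.SeparableSpace X]
    (ν : Set X → ℝ) (τ M : ℝ) {δ : ℝ} (hδ : 0 < δ) :
    ∃ (u : Set X) (r : X → ℝ), u.Countable ∧ (u.PairwiseDisjoint fun b => ball b (r b)) ∧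
      infiniteUpperDensitySet ν τ ⊆ ⋃ b ∈ u, closedBall b (5 * r b) ∧
      ∀ b ∈ u, r b ∈ Ioc 0 δ ∧ M * r b ^ τ < ν (ball b (r b)) := by
  choose! r hr hν using fun x (hx : x ∈ infiniteUpperDensitySet ν τ) =>
    exists_lt_apply_ball_of_mem_infiniteUpperDensitySet hx M hδ
  obtain ⟨u, huS, hdisj, hcover⟩ :=
    Vitali.exists_disjoint_subfamily_covering_enlargement_closedBall
      (infiniteUpperDensitySet ν τ) id r δ (fun x hx => (hr x hx).2) 5 (by norm_num)
  refine ⟨u, r, hdisj.countable_of_nonempty_interior fun b hb => ?_,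
    hdisj.mono fun b => ball_subset_closedBall, fun x hx => ?_,
    fun b hb => ⟨hr b (huS hb), hν b (huS hb)⟩⟩
  · exact (nonempty_ball.2 (hr b (huS hb)).1).mono ball_subset_interior_closedBall
  · obtain ⟨b, hb, hsub⟩ := hcover x hx
    exact mem_biUnion hb (hsub (mem_closedBall_self (hr x hx).1.le))

variable [MeasurableSpace X] [BorelSpace X] [TopologicalSpace.SeparableSpace X]

theorem hausdorffMeasure_infiniteUpperDensitySet_le {ν : Set X → ℝ}
    (hsuper : CountablySuperadditiveOnOpens ν) (hmono : MonotoneOn ν {U | IsOpen U}) {τ M : ℝ}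
    (hτ : 0 ≤ τ) (hM : 0 < M) :
    μH[τ] (infiniteUpperDensitySet ν τ) ≤ ENNReal.ofReal (10 ^ τ / M * ν univ) := by
  choose u r hu hdisj hcover hr using fun m : ℕ =>
    exists_countable_disjoint_balls_covering ν τ M (Nat.one_div_pos_of_nat (n := m))
  have : ∀ m, Countable (u m) := fun m => (hu m).to_subtype
  have hδ : Tendsto (fun m : ℕ => ENNReal.ofReal (10 * (1 / ((m : ℝ) + 1)))) atTop (𝓝 0) := by
    simpa using ENNReal.tendsto_ofReal (tendsto_one_div_add_atTop_nhds_zero_nat.const_mul 10)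
  have hdiam : ∀ m (b : u m),
      ediam (closedBall (b : X) (5 * r m b)) ≤ ENNReal.ofReal (10 * (1 / ((m : ℝ) + 1))) :=
    fun m b => (ediam_closedBall_le_ofReal _ _).trans
      (ENNReal.ofReal_le_ofReal (by linarith [(hr m b b.2).1.2]))
  have hsum : ∀ m, ∑' b : u m, ediam (closedBall (b : X) (5 * r m b)) ^ τ
      ≤ ENNReal.ofReal (10 ^ τ / M * ν univ) := fun m => calc
    _ ≤ ∑' b : u m, ENNReal.ofReal (10 ^ τ / M) * ENNReal.ofReal (ν (ball b (r m b))) :=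
        ENNReal.tsum_le_tsum fun b =>
          ediam_closedBall_rpow_le _ hτ hM (hr m b b.2).1.1 (hr m b b.2).2
    _ = ENNReal.ofReal (10 ^ τ / M) * ∑' b : u m, ENNReal.ofReal (ν (ball b (r m b))) :=
        ENNReal.tsum_mul_left
    _ ≤ ENNReal.ofReal (10 ^ τ / M) * ENNReal.ofReal (ν univ) := by
        gcongr
        exact tsum_ofReal_apply_ball_le hsuper hmono (hdisj m) fun b hb =>
          (mul_nonneg hM.le (Real.rpow_nonneg (hr m b hb).1.1.le τ)).trans (hr m b hb).2.le
    _ = ENNReal.ofReal (10 ^ τ / M * ν univ) := (ENNReal.ofReal_mul (by positivity)).symm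
  calc μH[τ] (infiniteUpperDensitySet ν τ)
      ≤ liminf (fun m => ∑' b : u m, ediam (closedBall (b : X) (5 * r m b)) ^ τ) atTop :=
        Measure.hausdorffMeasure_le_liminf_tsum τ _ _ hδ
          (fun m (b : u m) => closedBall (b : X) (5 * r m b))
          (Eventually.of_forall hdiam)
          (Eventually.of_forall fun m => by simpa only [iUnion_coe_set] using hcover m)
    _ ≤ ENNReal.ofReal (10 ^ τ / M * ν univ) :=
        (liminf_le_liminf (Eventually.of_forall hsum)).trans (liminf_const _).le

theorem hausdorffMeasure_infiniteUpperDensitySet_eq_zero {ν : Set X → ℝ}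
    (hsuper : CountablySuperadditiveOnOpens ν) (hmono : MonotoneOn ν {U | IsOpen U}) {τ : ℝ}
    (hτ : 0 ≤ τ) : μH[τ] (infiniteUpperDensitySet ν τ) = 0 := by
  have hlim : Tendsto (fun M : ℝ => ENNReal.ofReal (10 ^ τ / M * ν univ)) atTop (𝓝 0) := by
    simpa using ENNReal.tendsto_ofReal
      ((tendsto_const_nhds.div_atTop tendsto_id).mul_const (ν univ))
  exact nonpos_iff_eq_zero.1 <| ge_of_tendsto hlim <| (eventually_gt_atTop 0).mono fun M hM =>
    hausdorffMeasure_infiniteUpperDensitySet_le hsuper hmono hτ hM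

end

theorem statement0_general (n : ℕ) (τ : ℝ) (hτ : 0 ≤ τ)
    (ν : Set (Euc n) → ℝ)
    (hmono : ∀ U V : Set (Euc n), IsOpen U → IsOpen V → U ⊆ V → ν U ≤ ν V)
    (hsuper : ∀ U : ℕ → Set (Euc n), (∀ j, IsOpen (U j)) → Pairwise (Function.onFun Disjoint U) →
      ∀ N : ℕ, ∑ j ∈ Finset.range N, ν (U j) ≤ ν (⋃ j, U j)) :
    μH[τ] {x : Euc n | ∀ M : ℝ, ∃ᶠ ρ in 𝓝[>] (0:ℝ), M < ρ ^ (-τ) * ν (ball x ρ)} = 0 ∧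
    dimH {x : Euc n | ∀ M : ℝ, ∃ᶠ ρ in 𝓝[>] (0:ℝ), M < ρ ^ (-τ) * ν (ball x ρ)}
      ≤ ENNReal.ofReal τ := by
  have hzero : μH[τ] (infiniteUpperDensitySet ν τ) = 0 :=
    hausdorffMeasure_infiniteUpperDensitySet_eq_zero hsuper
      (fun U hU V hV hUV => hmono U V hU hV hUV) hτ
  refine ⟨hzero, dimH_le_of_hausdorffMeasure_ne_top (d := τ.toNNReal) ?_⟩
  rw [Real.coe_toNNReal τ hτ]
  exact hzero ▸ ENNReal.zero_ne_top

/-- Modified Giusti's lemma. If `ν` is a finite, nonnegative, nondecreasing and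
countably superadditive set function defined on the open subsets of `ℝⁿ`, and `τ ≥ 0`, then the
set `S` of points where `limsup_{ρ→0⁺} ρ^{-τ} ν(B(x,ρ)) = ∞` is `H^τ`-null, and in particular its
Hausdorff dimension is at most `τ`. -/
theorem statement0 (n : ℕ) (τ : ℝ) (hτ : 0 ≤ τ)
    (ν : Set (Euc n) → ℝ)
    (hnonneg : ∀ U : Set (Euc n), IsOpen U → 0 ≤ ν U)
    (hmono : ∀ U V : Set (Euc n), IsOpen U → IsOpen V → U ⊆ V → ν U ≤ ν V)
    (hsuper : ∀ U : ℕ → Set (Euc n), (∀ j, IsOpen (U j)) → Pairwise (Function.onFun Disjoint U) →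
      ∀ N : ℕ, ∑ j ∈ Finset.range N, ν (U j) ≤ ν (⋃ j, U j)) :
    μH[τ] {x : Euc n | ∀ M : ℝ, ∃ᶠ ρ in 𝓝[>] (0:ℝ), M < ρ ^ (-τ) * ν (ball x ρ)} = 0 ∧
    dimH {x : Euc n | ∀ M : ℝ, ∃ᶠ ρ in 𝓝[>] (0:ℝ), M < ρ ^ (-τ) * ν (ball x ρ)}
      ≤ ENNReal.ofReal τ :=
  statement0_general n τ hτ ν hmono hsuper
end
end

section
/- Let t ≥ 0, A ≥ 1, 1 ≤ p < ∞ and β > 0, and let Γ ⊆ ℝⁿ be a Borel set that is lower Ahlfors regular: A^{−1} ρ^t ≤ H^t(Γ ∩ B(x̄,ρ)) for all x̄ ∈ Γ and 0 < ρ ≤ diam(Γ). Let v ∈ W^{β,p}(Γ) and define v_β(x̄) := ( ∫_{Γ∩B(x̄,1)} |v(z) − v(x̄)|ᵖ / ‖z − x̄‖^{t+βp} dH^t(z) )^{1/p}. Then v_β ∈ Lᵖ(Γ, H^t), and there is a constant c (depending only on n, p, t, β and A) such that |v(ȳ) − v(x̄)| ≤ c ‖ȳ − x̄‖^β ( v_β(ȳ)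 + v_β(x̄) ) for all x̄, ȳ ∈ Γ with ‖ȳ − x̄‖ ≤ 1/2. -/
open MeasureTheory Metric Set Filter
open scoped ENNReal NNReal Topology

noncomputable section

variable {n : ℕ}

/-- `v_β(xb)` for the fractional-smoothness pointwise bound. -/
def vbeta (t β p : ℝ) (Γ : Set (Euc n)) (v : Euc n → ℝ) (xb : Euc n) : ℝ≥0∞ :=
  (∫⁻ z in Γ ∩ ball xb 1,
      ENNReal.ofReal (|v z - v xb| ^ p / dist z xb ^ (t + β * p)) ∂μH[t]) ^ (1 / p)


/-! Averaging over `s = Γ ∩ B(x̄, ‖ȳ - x̄‖)` bounds `|v(ȳ) - v(x̄)|ᵖ H^t(s)` by the `Lᵖ(s)`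
oscillations of `v` around `v(ȳ)` and `v(x̄)`. Every `z ∈ s` lies within `2‖ȳ - x̄‖ ≤ 1` of both
points, so each oscillation is at most `(2‖ȳ - x̄‖)^{t+βp}` times `v_β(ȳ)ᵖ` resp. `v_β(x̄)ᵖ`, while
lower Ahlfors regularity gives `H^t(s) ≥ A⁻¹‖ȳ - x̄‖ᵗ`. Dividing leaves `‖ȳ - x̄‖^{βp}`.
`v_β ∈ Lᵖ` is immediate: `v_β(x̄)ᵖ` is the inner integral of the seminorm cut down to `B(x̄, 1)`. -/

lemma vbeta_rpow {t β p : ℝ} (hp : p ≠ 0) (Γ : Set (Euc n)) (v : Euc n → ℝ) (x : Euc n) :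
    vbeta t β p Γ v x ^ p = ∫⁻ z in Γ ∩ ball x 1,
      ENNReal.ofReal (|v z - v x| ^ p / dist z x ^ (t + β * p)) ∂μH[t] := by
  rw [vbeta, one_div, ENNReal.rpow_inv_rpow hp]

lemma lintegral_vbeta_rpow_le {t β p : ℝ} (hp : p ≠ 0) (Γ : Set (Euc n)) (v : Euc n → ℝ) :
    ∫⁻ x in Γ, vbeta t β p Γ v x ^ p ∂μH[t] ≤
      ∫⁻ x in Γ, ∫⁻ y in Γ,
        ENNReal.ofReal (|v y - v x| ^ p / dist y x ^ (t + β * p)) ∂μH[t] ∂μH[t] :=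
  lintegral_mono fun x => (vbeta_rpow hp Γ v x).trans_le (lintegral_mono_set inter_subset_left)

lemma setLIntegral_rpow_le_vbeta {t β p : ℝ} (hp : 0 < p) (he : 0 ≤ t + β * p)
    {Γ s : Set (Euc n)} (v : Euc n → ℝ) {w : Euc n} {R : ℝ} (hs : MeasurableSet s)
    (hsΓ : s ⊆ Γ ∩ ball w 1) (hsR : s ⊆ closedBall w R) :
    ∫⁻ z in s, ENNReal.ofReal |v z - v w| ^ p ∂μH[t] ≤
      ENNReal.ofReal (R ^ (t + β * p)) * vbeta t β p Γ v w ^ p := by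
  rw [vbeta_rpow hp.ne', ← lintegral_const_mul' _ _ ENNReal.ofReal_ne_top]
  refine (setLIntegral_mono' hs fun z hz => ?_).trans (lintegral_mono_set hsΓ)
  rw [ENNReal.ofReal_rpow_of_nonneg (abs_nonneg _) hp.le, ← ENNReal.ofReal_mul' (by positivity)]
  refine ENNReal.ofReal_le_ofReal ?_
  rcases eq_or_ne z w with rfl | hzw
  · simp [Real.zero_rpow hp.ne']
  · have hd : 0 < dist z w ^ (t + β * p) := Real.rpow_pos_of_pos (dist_pos.2 hzw) _
    rw [mul_div_assoc', le_div_iff₀ hd, mul_comm]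
    exact mul_le_mul_of_nonneg_right
      (Real.rpow_le_rpow dist_nonneg (mem_closedBall.1 (hsR hz)) he) (by positivity)

lemma ofReal_abs_sub_rpow_mul_le {α : Type*} [MeasurableSpace α] {μ : Measure α} {p : ℝ}
    (hp : 1 ≤ p) {f : α → ℝ} {s : Set α} (hf : AEMeasurable f (μ.restrict s)) (a b : ℝ) :
    ENNReal.ofReal |a - b| ^ p * μ s ≤
      2 ^ (p - 1) * (∫⁻ z in s, ENNReal.ofReal |f z - a| ^ p ∂μ +
        ∫⁻ z in s, ENNReal.ofReal |f z - b| ^ p ∂μ) := by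
  have hmeas : AEMeasurable (fun z => ENNReal.ofReal |f z - a| ^ p) (μ.restrict s) := by
    fun_prop
  rw [← setLIntegral_const, ← lintegral_add_left' hmeas,
    ← lintegral_const_mul' _ _ (by simp)]
  refine lintegral_mono fun z => le_trans ?_ (ENNReal.rpow_add_le_mul_rpow_add_rpow _ _ hp)
  gcongr
  rw [← ENNReal.ofReal_add (abs_nonneg _) (abs_nonneg _)]
  exact ENNReal.ofReal_le_ofReal ((abs_sub_comm (f z) a) ▸ abs_sub_le a (f z) b)

lemma ofReal_abs_sub_le_vbeta {t β p A : ℝ} (ht : 0 ≤ t) (hp : 1 ≤ p) (hβ : 0 ≤ β) (hA : 0 < A)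
    {Γ : Set (Euc n)} (hΓ : MeasurableSet Γ) {v : Euc n → ℝ}
    (hv : AEMeasurable v (μH[t].restrict Γ)) {x y : Euc n} (hxy : 0 < dist y x)
    (hxy_le : dist y x ≤ 1 / 2)
    (hreg : ENNReal.ofReal (A⁻¹ * dist y x ^ t) ≤ μH[t] (Γ ∩ ball x (dist y x))) :
    ENNReal.ofReal |v y - v x| ≤
      ENNReal.ofReal ((A * 2 ^ (p - 1) * 2 ^ (t + β * p)) ^ (1 / p) * dist y x ^ β) *
        (vbeta t β p Γ v y + vbeta t β p Γ v x) := by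
  set r := dist y x
  set C := (A * 2 ^ (p - 1) * 2 ^ (t + β * p)) ^ (1 / p) with hC
  set s := Γ ∩ ball x r
  have hp0 : 0 < p := by linarith
  have he : 0 ≤ t + β * p := by positivity
  have hs : MeasurableSet s := hΓ.inter measurableSet_ball
  have hdist : ∀ z ∈ s, dist z x < r ∧ dist z y < 2 * r := fun z hz =>
    ⟨hz.2, by linarith [dist_triangle z x y, dist_comm x y, mem_ball.1 hz.2]⟩
  have hsx : s ⊆ Γ ∩ ball x 1 := fun z hz => ⟨hz.1, mem_ball.2 (by linarith [hdist z hz])⟩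
  have hsy : s ⊆ Γ ∩ ball y 1 := fun z hz => ⟨hz.1, mem_ball.2 (by linarith [hdist z hz])⟩
  have hsx' : s ⊆ closedBall x (2 * r) := fun z hz =>
    mem_closedBall.2 (by linarith [hdist z hz])
  have hsy' : s ⊆ closedBall y (2 * r) := fun z hz => mem_closedBall.2 (hdist z hz).2.le
  have hconst : (2 : ℝ≥0∞) ^ (p - 1) * ENNReal.ofReal ((2 * r) ^ (t + β * p)) =
      ENNReal.ofReal (C * r ^ β) ^ p * ENNReal.ofReal (A⁻¹ * r ^ t) := by
    rw [← ENNReal.ofReal_ofNat 2, ENNReal.ofReal_rpow_of_pos two_pos,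
      ENNReal.ofReal_rpow_of_nonneg (by positivity) hp0.le, ← ENNReal.ofReal_mul (by positivity),
      ← ENNReal.ofReal_mul (by positivity)]
    congr 1
    rw [Real.mul_rpow zero_le_two hxy.le, Real.rpow_add hxy,
      Real.mul_rpow (by positivity : 0 ≤ C) (by positivity), hC, one_div,
      Real.rpow_inv_rpow (by positivity) hp0.ne', ← Real.rpow_mul hxy.le]
    field_simp
  have hm : ENNReal.ofReal (A⁻¹ * r ^ t) ≠ 0 := (ENNReal.ofReal_pos.2 (by positivity)).ne'
  rw [← ENNReal.rpow_le_rpow_iff hp0, ENNReal.mul_rpow_of_nonneg _ _ hp0.le,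
    ← ENNReal.mul_le_mul_iff_left hm ENNReal.ofReal_ne_top]
  calc ENNReal.ofReal |v y - v x| ^ p * ENNReal.ofReal (A⁻¹ * r ^ t)
      ≤ ENNReal.ofReal |v y - v x| ^ p * μH[t] s := by gcongr
    _ ≤ 2 ^ (p - 1) * (∫⁻ z in s, ENNReal.ofReal |v z - v y| ^ p ∂μH[t] +
          ∫⁻ z in s, ENNReal.ofReal |v z - v x| ^ p ∂μH[t]) :=
        ofReal_abs_sub_rpow_mul_le hp (hv.mono_measure (Measure.restrict_mono
          inter_subset_left le_rfl)) _ _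
    _ ≤ 2 ^ (p - 1) * (ENNReal.ofReal ((2 * r) ^ (t + β * p)) * vbeta t β p Γ v y ^ p +
          ENNReal.ofReal ((2 * r) ^ (t + β * p)) * vbeta t β p Γ v x ^ p) := by
        gcongr
        exacts [setLIntegral_rpow_le_vbeta hp0 he v hs hsy hsy',
          setLIntegral_rpow_le_vbeta hp0 he v hs hsx hsx']
    _ ≤ 2 ^ (p - 1) * ENNReal.ofReal ((2 * r) ^ (t + β * p)) *
          (vbeta t β p Γ v y + vbeta t β p Γ v x) ^ p := by
        rw [mul_assoc, ← mul_add]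
        gcongr
        exact ENNReal.add_rpow_le_rpow_add _ _ hp
    _ = _ := by rw [hconst]; ring

/-- On a lower Ahlfors-regular set `Γ`, any `v ∈ W^{β,p}(Γ)` satisfies
`v_β ∈ Lᵖ(Γ,H^t)` and the pointwise Hölder-type bound
`|v(yb) − v(xb)| ≤ c ‖yb − xb‖^β (v_β(yb) + v_β(xb))` for `‖yb − xb‖ ≤ 1/2`. -/
theorem statement2 (n : ℕ) (t A p β : ℝ) (ht : 0 ≤ t) (hA : 1 ≤ A) (hp : 1 ≤ p) (hβ : 0 < β) :
    ∃ c : ℝ, 0 < c ∧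
      ∀ (Γ : Set (Euc n)), MeasurableSet Γ →
        (∀ xb ∈ Γ, ∀ ρ : ℝ, 0 < ρ → ENNReal.ofReal ρ ≤ EMetric.diam Γ →
          ENNReal.ofReal (A⁻¹ * ρ ^ t) ≤ μH[t] (Γ ∩ ball xb ρ)) →
        ∀ v : Euc n → ℝ, AEMeasurable v (μH[t].restrict Γ) →
          (∫⁻ x in Γ, ENNReal.ofReal (|v x| ^ p) ∂μH[t]) < ⊤ →
          (∫⁻ x in Γ, ∫⁻ y in Γ,
              ENNReal.ofReal (|v y - v x| ^ p / dist y x ^ (t + β * p)) ∂μH[t] ∂μH[t]) < ⊤ →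
          (∫⁻ xb in Γ, vbeta t β p Γ v xb ^ p ∂μH[t]) < ⊤ ∧
          ∀ xb ∈ Γ, ∀ yb ∈ Γ, dist yb xb ≤ 1 / 2 →
            ENNReal.ofReal (|v yb - v xb|) ≤
              ENNReal.ofReal (c * dist yb xb ^ β) *
                (vbeta t β p Γ v yb + vbeta t β p Γ v xb) := by
  have hA0 : 0 < A := by linarith
  refine ⟨(A * 2 ^ (p - 1) * 2 ^ (t + β * p)) ^ (1 / p), by positivity,
    fun Γ hΓ hreg v hv _ hW => ⟨(lintegral_vbeta_rpow_le (by positivity) Γ v).trans_lt hW,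
      fun x hx y hy hxy => ?_⟩⟩
  rcases (dist_nonneg (x := y) (y := x)).eq_or_lt with h | h
  · simp [dist_eq_zero.1 h.symm]
  · refine ofReal_abs_sub_le_vbeta ht hp hβ.le hA0 hΓ hv h hxy (hreg x hx _ h ?_)
    exact (edist_dist y x).symm.trans_le (Metric.edist_le_ediam_of_mem hy hx)
end
end

section
/- Let t ≥ 0, A ≥ 1, 1 ≤ p < ∞ and β > 0, and let Γ ⊆ ℝⁿ be a Borel set that is lower Ahlfors regular: A^{−1} ρ^t ≤ H^t(Γ ∩ B(x̄,ρ)) for all x̄ ∈ Γ and 0 < ρ ≤ diam(Γ). If v ∈ W^{β,p}(Γ), then for every 0 < β′ < β, for H^t-almost every x̄₀ ∈ Γ one has lim_{ρ→0⁺} ρ^{−pβ′} · ⨍_{Γ∩B(x̄₀,ρ)} |v(x̄) − v(x̄₀)|ᵖ dH^t(x̄) = 0, where ⨍ denotes the average with respect to H^t restricted to Γ. -/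
open MeasureTheory Metric Set Filter
open scoped ENNReal NNReal Topology

noncomputable section

variable {n : ℕ}

/-! The fractional energy `F x₀ = ∫_Γ |v y - v x₀|^p / |y - x₀|^(t+βp) dH^t(y)` has finite
integral over `Γ` (the `W^{β,p}` seminorm), so it is finite at a.e. `x₀`. At such a point,
`|y - x₀| < ρ` on the ball gives `∫_{Γ∩B(x₀,ρ)} |v - v x₀|^p ≤ ρ^(t+βp) F x₀`, while lower Ahlfors
regularity gives `H^t(Γ ∩ B(x₀,ρ)) ≥ A⁻¹ρ^t`; hence the average is `O(ρ^(βp))`, which beats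
`ρ^(-pβ')`. As `H^t` need not be σ-finite, measurability of `F` cannot come from Tonelli: instead
`(a, x) ↦ ∫_Γ |v y - a|^p / |y - x|^(t+βp)` is lower semicontinuous by Fatou's lemma. -/

theorem lowerSemicontinuous_lintegral {X Y : Type*} [TopologicalSpace X]
    [FirstCountableTopology X] [MeasurableSpace Y] {ν : Measure Y} {f : X → Y → ℝ≥0∞}
    (hf : ∀ y, LowerSemicontinuous (f · y)) (hfm : ∀ x, AEMeasurable (f x) ν) :
    LowerSemicontinuous fun x => ∫⁻ y, f x y ∂ν :=
  lowerSemicontinuous_iff_le_liminf.2 fun x =>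
    (lintegral_mono fun y => (hf y).le_liminf x).trans (lintegral_liminf_le' hfm)

section FractionalQuotient

variable {X : Type*} [MetricSpace X]

/-- At `q.2 = y` the quotient takes the junk value `0`, which is what makes it lower
semicontinuous rather than discontinuous. -/
theorem lowerSemicontinuous_ofReal_rpow_abs_sub_div_dist (c : ℝ) (y : X) {p e : ℝ} (hp : 0 ≤ p)
    (he : e ≠ 0) :
    LowerSemicontinuous fun q : ℝ × X => ENNReal.ofReal (|c - q.1| ^ p / dist y q.2 ^ e) := by
  rintro ⟨a, x⟩
  rcases eq_or_ne x y with rfl | hxy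
  · intro b hb
    simp [Real.zero_rpow he] at hb
  · have hd : 0 < dist y x := dist_pos.2 hxy.symm
    refine ContinuousAt.lowerSemicontinuousAt (ENNReal.continuous_ofReal.continuousAt.comp
      (ContinuousAt.div ?_ ?_ (Real.rpow_pos_of_pos hd e).ne'))
    · exact ((Real.continuous_rpow_const hp).comp
        (continuous_const.sub continuous_fst).abs).continuousAt
    · exact (continuous_const.dist continuous_snd).continuousAt.rpow_const (Or.inl hd.ne')

variable [MeasurableSpace X] [BorelSpace X] [SecondCountableTopology X]

theorem measurable_lintegral_ofReal_rpow_abs_sub_div_dist {g : X → ℝ} (hg : Measurable g)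
    {p e : ℝ} (hp : 0 ≤ p) (he : e ≠ 0) (ν : Measure X) :
    Measurable fun x => ∫⁻ y, ENNReal.ofReal (|g y - g x| ^ p / dist y x ^ e) ∂ν := by
  have hlsc : ∀ y, LowerSemicontinuous fun q : ℝ × X =>
      ENNReal.ofReal (|g y - q.1| ^ p / dist y q.2 ^ e) :=
    fun y => lowerSemicontinuous_ofReal_rpow_abs_sub_div_dist (g y) y hp he
  have hmeas : ∀ q : ℝ × X, AEMeasurable
      (fun y => ENNReal.ofReal (|g y - q.1| ^ p / dist y q.2 ^ e)) ν := fun q =>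
    (((hg.sub measurable_const).abs.pow_const p).div
      ((measurable_id.dist measurable_const).pow_const e)).ennreal_ofReal.aemeasurable
  have hF : Measurable fun q : ℝ × X =>
      ∫⁻ y, ENNReal.ofReal (|g y - q.1| ^ p / dist y q.2 ^ e) ∂ν :=
    (lowerSemicontinuous_lintegral hlsc hmeas).measurable
  exact hF.comp (f := fun x => (g x, x)) (hg.prodMk measurable_id)

theorem aemeasurable_lintegral_ofReal_rpow_abs_sub_div_dist {ν : Measure X} {v : X → ℝ}
    (hv : AEMeasurable v ν) {p e : ℝ} (hp : 0 ≤ p) (he : e ≠ 0) :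
    AEMeasurable (fun x => ∫⁻ y, ENNReal.ofReal (|v y - v x| ^ p / dist y x ^ e) ∂ν) ν := by
  refine ⟨_, measurable_lintegral_ofReal_rpow_abs_sub_div_dist hv.measurable_mk hp he ν, ?_⟩
  filter_upwards [hv.ae_eq_mk] with x hx
  refine lintegral_congr_ae ?_
  filter_upwards [hv.ae_eq_mk] with y hy
  rw [hx, hy]

end FractionalQuotient

section LebesguePoint

variable {X : Type*} [MetricSpace X] [MeasurableSpace X] [OpensMeasurableSpace X]
  {μ : Measure X} {s : Set X} {v : X → ℝ} {x₀ : X}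

theorem setLIntegral_inter_ball_le (hs : MeasurableSet s) {p e ρ : ℝ} (hp : 0 < p) (he : 0 ≤ e) :
    ∫⁻ y in s ∩ ball x₀ ρ, ENNReal.ofReal (|v y - v x₀| ^ p) ∂μ ≤
      ENNReal.ofReal (ρ ^ e) *
        ∫⁻ y in s, ENNReal.ofReal (|v y - v x₀| ^ p / dist y x₀ ^ e) ∂μ := by
  have hpt : ∀ y ∈ s ∩ ball x₀ ρ, ENNReal.ofReal (|v y - v x₀| ^ p) ≤
      ENNReal.ofReal (ρ ^ e) * ENNReal.ofReal (|v y - v x₀| ^ p / dist y x₀ ^ e) := by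
    rintro y ⟨-, hy⟩
    rcases eq_or_ne y x₀ with rfl | hne
    · simp [Real.zero_rpow hp.ne']
    have hd : 0 < dist y x₀ := dist_pos.2 hne
    rw [← ENNReal.ofReal_mul (Real.rpow_nonneg (hd.le.trans (mem_ball.1 hy).le) e)]
    refine ENNReal.ofReal_le_ofReal ?_
    rw [mul_div_assoc', le_div_iff₀ (Real.rpow_pos_of_pos hd e), mul_comm]
    exact mul_le_mul_of_nonneg_right (Real.rpow_le_rpow hd.le (mem_ball.1 hy).le he)
      (Real.rpow_nonneg (abs_nonneg _) p)
  calc ∫⁻ y in s ∩ ball x₀ ρ, ENNReal.ofReal (|v y - v x₀| ^ p) ∂μ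
      ≤ ∫⁻ y in s ∩ ball x₀ ρ,
          ENNReal.ofReal (ρ ^ e) * ENNReal.ofReal (|v y - v x₀| ^ p / dist y x₀ ^ e) ∂μ :=
        setLIntegral_mono' (hs.inter measurableSet_ball) hpt
    _ = ENNReal.ofReal (ρ ^ e) *
          ∫⁻ y in s ∩ ball x₀ ρ, ENNReal.ofReal (|v y - v x₀| ^ p / dist y x₀ ^ e) ∂μ :=
        lintegral_const_mul' _ _ ENNReal.ofReal_ne_top
    _ ≤ _ := by gcongr; exact inter_subset_left

theorem setIntegral_inter_ball_le (hs : MeasurableSet s) {p e ρ : ℝ} (hp : 0 < p) (he : 0 ≤ e)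
    (hρ : 0 ≤ ρ) (hF : ∫⁻ y in s, ENNReal.ofReal (|v y - v x₀| ^ p / dist y x₀ ^ e) ∂μ ≠ ⊤) :
    ∫ y in s ∩ ball x₀ ρ, |v y - v x₀| ^ p ∂μ ≤
      ρ ^ e * (∫⁻ y in s, ENNReal.ofReal (|v y - v x₀| ^ p / dist y x₀ ^ e) ∂μ).toReal := by
  have hf : ∀ y, 0 ≤ |v y - v x₀| ^ p := fun y => Real.rpow_nonneg (abs_nonneg _) p
  rw [← ENNReal.ofReal_le_ofReal_iff (by positivity), ENNReal.ofReal_mul (by positivity),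
    ENNReal.ofReal_toReal hF, ← Real.enorm_of_nonneg (integral_nonneg hf)]
  calc ‖∫ y in s ∩ ball x₀ ρ, |v y - v x₀| ^ p ∂μ‖ₑ
      ≤ ∫⁻ y in s ∩ ball x₀ ρ, ‖|v y - v x₀| ^ p‖ₑ ∂μ := enorm_integral_le_lintegral_enorm _
    _ = ∫⁻ y in s ∩ ball x₀ ρ, ENNReal.ofReal (|v y - v x₀| ^ p) ∂μ := by
      simp only [Real.enorm_of_nonneg (hf _)]
    _ ≤ _ := setLIntegral_inter_ball_le hs hp he

theorem ENNReal.toReal_inv_le_of_ofReal_le {a : ℝ} {m : ℝ≥0∞} (ha : 0 < a)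
    (h : ENNReal.ofReal a ≤ m) :
    m.toReal⁻¹ ≤ a⁻¹ := by
  rcases eq_or_ne m ⊤ with rfl | hm
  · simpa using ha.le
  · exact inv_anti₀ ha ((ENNReal.ofReal_le_iff_le_toReal hm).1 h)

theorem setAverage_inter_ball_le (hs : MeasurableSet s) {A t p β ρ : ℝ} (hA : 0 < A)
    (hp : 0 < p) (he : 0 ≤ t + β * p) (hρ : 0 < ρ)
    (hreg : ENNReal.ofReal (A⁻¹ * ρ ^ t) ≤ μ (s ∩ ball x₀ ρ))
    (hF : ∫⁻ y in s, ENNReal.ofReal (|v y - v x₀| ^ p / dist y x₀ ^ (t + β * p)) ∂μ ≠ ⊤) :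
    ⨍ y in s ∩ ball x₀ ρ, |v y - v x₀| ^ p ∂μ ≤
      A * (∫⁻ y in s, ENNReal.ofReal (|v y - v x₀| ^ p / dist y x₀ ^ (t + β * p)) ∂μ).toReal *
        ρ ^ (β * p) := by
  set K := (∫⁻ y in s, ENNReal.ofReal (|v y - v x₀| ^ p / dist y x₀ ^ (t + β * p)) ∂μ).toReal
  have hmeasure : (μ (s ∩ ball x₀ ρ)).toReal⁻¹ ≤ A * ρ ^ (-t) := by
    have := ENNReal.toReal_inv_le_of_ofReal_le (by positivity) hreg
    rwa [mul_inv, inv_inv, ← Real.rpow_neg hρ.le] at this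
  have hint := setIntegral_inter_ball_le hs hp he hρ.le hF
  rw [setAverage_eq, smul_eq_mul]
  calc (μ (s ∩ ball x₀ ρ)).toReal⁻¹ * ∫ y in s ∩ ball x₀ ρ, |v y - v x₀| ^ p ∂μ
      ≤ A * ρ ^ (-t) * (ρ ^ (t + β * p) * K) :=
        mul_le_mul hmeasure hint (integral_nonneg fun y => by positivity) (by positivity)
    _ = A * K * ρ ^ (β * p) := by
      rw [show A * ρ ^ (-t) * (ρ ^ (t + β * p) * K) = A * K * (ρ ^ (-t) * ρ ^ (t + β * p)) by
        ring, ← Real.rpow_add hρ, neg_add_cancel_left]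

theorem tendsto_rpow_mul_setAverage_rpow_abs_sub (hs : MeasurableSet s) (hx₀ : x₀ ∈ s)
    {A t p β β' : ℝ} (hA : 0 < A) (hp : 0 < p) (he : 0 ≤ t + β * p) (hβ' : β' < β)
    (hreg : ∀ ρ : ℝ, 0 < ρ → ENNReal.ofReal ρ ≤ ediam s →
      ENNReal.ofReal (A⁻¹ * ρ ^ t) ≤ μ (s ∩ ball x₀ ρ))
    (hF : ∫⁻ y in s, ENNReal.ofReal (|v y - v x₀| ^ p / dist y x₀ ^ (t + β * p)) ∂μ ≠ ⊤) :
    Tendsto (fun ρ : ℝ => ρ ^ (-(p * β')) * ⨍ y in s ∩ ball x₀ ρ, |v y - v x₀| ^ p ∂μ)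
      (𝓝[>] 0) (𝓝 0) := by
  rcases eq_or_ne (ediam s) 0 with hdiam | hdiam
  · have hzero : ∀ ρ : ℝ, ⨍ y in s ∩ ball x₀ ρ, |v y - v x₀| ^ p ∂μ = 0 := fun ρ => by
      rw [setAverage_eq, setIntegral_eq_zero_of_forall_eq_zero, smul_zero]
      rintro y ⟨hy, -⟩
      rw [ediam_eq_zero_iff.1 hdiam hy hx₀, sub_self, abs_zero, Real.zero_rpow hp.ne']
    simpa only [hzero, mul_zero] using tendsto_const_nhds
  set K := (∫⁻ y in s, ENNReal.ofReal (|v y - v x₀| ^ p / dist y x₀ ^ (t + β * p)) ∂μ).toReal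
  have hc : 0 < p * (β - β') := mul_pos hp (sub_pos.2 hβ')
  have hsmall : ∀ᶠ ρ : ℝ in 𝓝[>] 0, ENNReal.ofReal ρ ≤ ediam s :=
    ((ENNReal.continuous_ofReal.tendsto' 0 0 ENNReal.ofReal_zero).mono_left
      nhdsWithin_le_nhds).eventually (eventually_le_nhds (pos_iff_ne_zero.2 hdiam))
  have hlim : Tendsto (fun ρ : ℝ => A * K * ρ ^ (p * (β - β'))) (𝓝[>] 0) (𝓝 0) := by
    have h0 : Tendsto (fun ρ : ℝ => ρ ^ (p * (β - β'))) (𝓝[>] 0) (𝓝 0) := by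
      simpa only [Real.zero_rpow hc.ne'] using
        (Real.continuousAt_rpow_const 0 _ (Or.inr hc.le)).tendsto.mono_left nhdsWithin_le_nhds
    simpa only [mul_zero] using h0.const_mul (A * K)
  refine squeeze_zero' ?_ ?_ hlim
  · filter_upwards [self_mem_nhdsWithin] with ρ (hρ : 0 < ρ)
    rw [setAverage_eq, smul_eq_mul]
    exact mul_nonneg (by positivity) (mul_nonneg (by positivity)
      (integral_nonneg fun y => by positivity))
  · filter_upwards [self_mem_nhdsWithin, hsmall] with ρ (hρ : 0 < ρ) hρs
    calc ρ ^ (-(p * β')) * ⨍ y in s ∩ ball x₀ ρ, |v y - v x₀| ^ p ∂μ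
        ≤ ρ ^ (-(p * β')) * (A * K * ρ ^ (β * p)) := by
          gcongr
          exact setAverage_inter_ball_le hs hA hp he hρ (hreg ρ hρ hρs) hF
      _ = A * K * ρ ^ (p * (β - β')) := by
          rw [show ρ ^ (-(p * β')) * (A * K * ρ ^ (β * p)) =
            A * K * (ρ ^ (-(p * β')) * ρ ^ (β * p)) by ring, ← Real.rpow_add hρ]
          ring_nf

end LebesguePoint

theorem statement3_general (n : ℕ) (t A p β : ℝ) (ht : 0 ≤ t) (hA : 1 ≤ A) (hp : 1 ≤ p) (hβ : 0 < β)
    (Γ : Set (Euc n)) (hΓ : MeasurableSet Γ)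
    (hAhl : ∀ xb ∈ Γ, ∀ ρ : ℝ, 0 < ρ → ENNReal.ofReal ρ ≤ EMetric.diam Γ →
      ENNReal.ofReal (A⁻¹ * ρ ^ t) ≤ μH[t] (Γ ∩ ball xb ρ))
    (v : Euc n → ℝ) (hvm : AEMeasurable v (μH[t].restrict Γ))
    (hvW : (∫⁻ x in Γ, ∫⁻ y in Γ,
        ENNReal.ofReal (|v y - v x| ^ p / dist y x ^ (t + β * p)) ∂μH[t] ∂μH[t]) < ⊤)
    (β' : ℝ) (hβ'β : β' < β) :
    ∀ᵐ xb₀ ∂(μH[t].restrict Γ),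
      Tendsto (fun ρ : ℝ =>
          ρ ^ (-(p * β')) * ⨍ xb in Γ ∩ ball xb₀ ρ, |v xb - v xb₀| ^ p ∂μH[t])
        (𝓝[>] (0:ℝ)) (𝓝 0) := by
  have hp0 : 0 < p := zero_lt_one.trans_le hp
  have he : 0 < t + β * p := by positivity
  have hF := ae_lt_top'
    (aemeasurable_lintegral_ofReal_rpow_abs_sub_div_dist hvm hp0.le he.ne') hvW.ne
  filter_upwards [ae_restrict_mem hΓ, hF] with x₀ hx₀ hFx₀
  exact tendsto_rpow_mul_setAverage_rpow_abs_sub hΓ hx₀ (zero_lt_one.trans_le hA) hp0 he.le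
    hβ'β (hAhl x₀ hx₀) hFx₀.ne

/-- On a lower Ahlfors-regular set `Γ`, any `v ∈ W^{β,p}(Γ)` satisfies, for each
`0 < β′ < β`, the refined Lebesgue-point property
`ρ^{-pβ′} ⨍_{Γ∩B(xb₀,ρ)} |v − v(xb₀)|ᵖ dH^t → 0` as `ρ → 0⁺`, for `H^t`-a.e. `xb₀ ∈ Γ`. -/
theorem statement3 (n : ℕ) (t A p β : ℝ) (ht : 0 ≤ t) (hA : 1 ≤ A) (hp : 1 ≤ p) (hβ : 0 < β)
    (Γ : Set (Euc n)) (hΓ : MeasurableSet Γ)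
    (hAhl : ∀ xb ∈ Γ, ∀ ρ : ℝ, 0 < ρ → ENNReal.ofReal ρ ≤ EMetric.diam Γ →
      ENNReal.ofReal (A⁻¹ * ρ ^ t) ≤ μH[t] (Γ ∩ ball xb ρ))
    (v : Euc n → ℝ) (hvm : AEMeasurable v (μH[t].restrict Γ))
    (hvLp : (∫⁻ x in Γ, ENNReal.ofReal (|v x| ^ p) ∂μH[t]) < ⊤)
    (hvW : (∫⁻ x in Γ, ∫⁻ y in Γ,
        ENNReal.ofReal (|v y - v x| ^ p / dist y x ^ (t + β * p)) ∂μH[t] ∂μH[t]) < ⊤)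
    (β' : ℝ) (hβ'0 : 0 < β') (hβ'β : β' < β) :
    ∀ᵐ xb₀ ∂(μH[t].restrict Γ),
      Tendsto (fun ρ : ℝ =>
          ρ ^ (-(p * β')) * ⨍ xb in Γ ∩ ball xb₀ ρ, |v xb - v xb₀| ^ p ∂μH[t])
        (𝓝[>] (0:ℝ)) (𝓝 0) :=
  statement3_general n t A p β ht hA hp hβ Γ hΓ hAhl v hvm hvW β' hβ'β
end
end

section
/- If u ∈ N^{s,p}(Ω), then u ∈ Lᵖ(Ω′) for every open set Ω′ whose closure is compact and contained in Ω; that is, N^{s,p}(Ω) ⊆ Lᵖ_loc(Ω). -/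
open MeasureTheory Metric Set Filter
open scoped ENNReal NNReal Topology

noncomputable section

variable {n : ℕ}

/-!
Since `Ψ(x) ⊆ Ω`, averaging `|u x| ≤ |u y - u x| + |u y|` over `y ∈ Ψ(x)` gives
`|u x| ≤ ⨍_{Ψ(x)} |u - u x| + |Ψ(x)|⁻¹ ‖u‖_{L¹(Ω)}`. On a compact `K ⊆ Ω` the distance `d` to
`∂Ω` stays in some `[δ, D]` with `δ > 0`, so `|Ψ(x)|` is bounded below and `d^{p s}` above.
Raising to the power `p` yields `|u|ᵖ ≤ C · (integrand of ν) + M` on `K`, an integrable bound.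
-/

section Average

variable {α : Type*} [MeasurableSpace α] {μ : Measure α} {B S : Set α} {u : α → ℝ}

theorem abs_le_setAverage_abs_sub_add_setAverage_abs (hB₀ : μ B ≠ 0) (hB : μ B ≠ ∞)
    (hu : IntegrableOn u B μ) (x : α) :
    |u x| ≤ (⨍ y in B, |u y - u x| ∂μ) + ⨍ y in B, |u y| ∂μ := by
  have hsub : IntegrableOn (fun y => |u y - u x|) B μ := (hu.sub (integrableOn_const hB)).abs
  calc |u x| = ⨍ _ in B, |u x| ∂μ := (setAverage_const hB₀ hB _).symm
    _ ≤ ⨍ y in B, (|u y - u x| + |u y|) ∂μ := by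
      simp only [setAverage_eq, smul_eq_mul]
      refine mul_le_mul_of_nonneg_left ?_ (by positivity)
      refine setIntegral_mono (integrableOn_const (C := |u x|) hB) (hsub.add hu.abs) fun y => ?_
      linarith [abs_sub_abs_le_abs_sub (u x) (u y), abs_sub_comm (u x) (u y)]
    _ = (⨍ y in B, |u y - u x| ∂μ) + ⨍ y in B, |u y| ∂μ := by
      simp only [setAverage_eq, integral_add hsub hu.abs, smul_add]

theorem setAverage_nonneg {f : α → ℝ} (hf : ∀ y, 0 ≤ f y) : 0 ≤ ⨍ y in B, f y ∂μ := by
  rw [setAverage_eq]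
  exact smul_nonneg (by positivity) (integral_nonneg hf)

theorem setAverage_abs_le_of_subset (hBS : B ⊆ S) (hu : IntegrableOn u S μ) :
    ⨍ y in B, |u y| ∂μ ≤ (μ B).toReal⁻¹ * ∫ y in S, |u y| ∂μ := by
  rw [setAverage_eq, smul_eq_mul]
  refine mul_le_mul_of_nonneg_left ?_ (by positivity)
  exact setIntegral_mono_set hu.abs (.of_forall fun _ => abs_nonneg _) hBS.eventuallyLE

end Average

theorem Real.rpow_le_max_one_rpow {d D a b : ℝ} (hd : 0 ≤ d) (hdD : d ≤ D) (ha : 0 ≤ a)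
    (hab : a ≤ b) : d ^ a ≤ max 1 D ^ b :=
  calc d ^ a ≤ max 1 D ^ a := Real.rpow_le_rpow hd (hdD.trans (le_max_right _ _)) ha
    _ ≤ max 1 D ^ b := Real.rpow_le_rpow_of_exponent_le (le_max_left _ _) hab

section DistBoundary

variable {Ω K : Set (Euc n)} {x : Euc n}

theorem continuous_dB : Continuous (dB Ω) := continuous_infDist_pt _

theorem dB_le_infDist_compl (hx : x ∈ Ω) (hΩ : Ω ≠ univ) : dB Ω x ≤ infDist x Ωᶜ := by
  obtain ⟨y, hy, hxy⟩ := exists_mem_frontier_infDist_compl_eq_dist hx hΩ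
  exact hxy ▸ infDist_le_dist_of_mem hy

theorem PsiB_subset (hx : x ∈ Ω) : PsiB Ω x ⊆ Ω := by
  rcases eq_or_ne Ω univ with rfl | hΩ
  · exact subset_univ _
  have hd : 0 ≤ dB Ω x := infDist_nonneg
  exact (ball_subset_ball (by linarith [dB_le_infDist_compl hx hΩ])).trans
    ball_infDist_compl_subset

theorem dB_pos (hΩ : IsOpen Ω) (hfr : (frontier Ω).Nonempty) (hx : x ∈ Ω) : 0 < dB Ω x :=
  (isClosed_frontier.notMem_iff_infDist_pos hfr).1 fun h => (hΩ.frontier_eq ▸ h).2 hx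

theorem IsCompact.exists_pos_le_dB (hK : IsCompact K) (hKΩ : K ⊆ Ω) (hΩ : IsOpen Ω)
    (hfr : (frontier Ω).Nonempty) : ∃ δ > 0, ∀ x ∈ K, δ ≤ dB Ω x :=
  hK.exists_forall_le' continuous_dB.continuousOn fun _ hx => dB_pos hΩ hfr (hKΩ hx)

theorem IsCompact.exists_dB_le (hK : IsCompact K) : ∃ D, ∀ x ∈ K, dB Ω x ≤ D :=
  hK.bddAbove_image continuous_dB.continuousOn |>.imp fun _ hD _ hx => hD ⟨_, hx, rfl⟩

theorem volume_ball_le_volume_PsiB {δ : ℝ} (hδ : δ ≤ dB Ω x) :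
    (volume (ball (0 : Euc n) (δ / 2))).toReal ≤ (volume (PsiB Ω x)).toReal := by
  rw [← Measure.addHaar_ball_center volume x]
  exact ENNReal.toReal_mono measure_ball_lt_top.ne
    (measure_mono (ball_subset_ball (by linarith)))

end DistBoundary

section Pointwise

variable {Ω : Set (Euc n)} {s : Euc n → ℝ} {p : ℝ} {u : Euc n → ℝ} {x : Euc n}

theorem nuInt_nonneg : 0 ≤ nuInt Ω s p u x :=
  mul_nonneg (Real.rpow_nonneg (setAverage_nonneg fun _ => abs_nonneg _) _)
    (Real.rpow_nonneg infDist_nonneg _)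

theorem setAverage_rpow_eq_nuInt_mul (hd : 0 < dB Ω x) :
    (⨍ y in PsiB Ω x, |u y - u x|) ^ p = nuInt Ω s p u x * dB Ω x ^ (p * s x) := by
  rw [nuInt, mul_assoc, ← Real.rpow_add hd, neg_add_cancel, Real.rpow_zero, mul_one]

theorem abs_rpow_le_nuInt_mul_add (hp : 1 ≤ p) (hu : IntegrableOn u Ω) (hx : x ∈ Ω)
    (hd : 0 < dB Ω x) :
    |u x| ^ p ≤ 2 ^ (p - 1) * (nuInt Ω s p u x * dB Ω x ^ (p * s x) +
      ((volume (PsiB Ω x)).toReal⁻¹ * ∫ y in Ω, |u y|) ^ p) := by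
  have hΨ₀ : volume (PsiB Ω x) ≠ 0 := (measure_ball_pos volume x (by linarith)).ne'
  set A := ⨍ y in PsiB Ω x, |u y - u x|
  set M := (volume (PsiB Ω x)).toReal⁻¹ * ∫ y in Ω, |u y|
  have hA : 0 ≤ A := setAverage_nonneg fun _ => abs_nonneg _
  have hM : 0 ≤ M := mul_nonneg (by positivity) (integral_nonneg fun _ => abs_nonneg _)
  have hux : |u x| ≤ A + M :=
    (abs_le_setAverage_abs_sub_add_setAverage_abs hΨ₀ measure_ball_lt_top.ne
      (hu.mono_set (PsiB_subset hx)) x).trans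
      (add_le_add le_rfl (setAverage_abs_le_of_subset (PsiB_subset hx) hu))
  calc |u x| ^ p ≤ (A + M) ^ p := Real.rpow_le_rpow (abs_nonneg _) hux (by linarith)
    _ ≤ 2 ^ (p - 1) * (A ^ p + M ^ p) := by
      exact_mod_cast NNReal.rpow_add_le_mul_rpow_add_rpow ⟨A, hA⟩ ⟨M, hM⟩ hp
    _ = _ := by rw [setAverage_rpow_eq_nuInt_mul hd]

end Pointwise

section Compact

variable {Ω K : Set (Euc n)} {s : Euc n → ℝ} {p b : ℝ} {u : Euc n → ℝ}

theorem IsCompact.exists_abs_rpow_le_nuInt (hK : IsCompact K) (hKΩ : K ⊆ Ω) (hΩ : IsOpen Ω)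
    (hfr : (frontier Ω).Nonempty) (hp : 1 ≤ p) (hs₀ : ∀ x, 0 ≤ s x) (hsb : ∀ x, s x ≤ b)
    (hu : IntegrableOn u Ω) :
    ∃ C M : ℝ, ∀ x ∈ K, |u x| ^ p ≤ C * nuInt Ω s p u x + M := by
  obtain ⟨δ, hδ, hδK⟩ := hK.exists_pos_le_dB hKΩ hΩ hfr
  obtain ⟨D, hDK⟩ := hK.exists_dB_le (Ω := Ω)
  set m := (volume (ball (0 : Euc n) (δ / 2))).toReal
  have hm : 0 < m :=
    ENNReal.toReal_pos (measure_ball_pos volume _ (by linarith)).ne' measure_ball_lt_top.ne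
  refine ⟨2 ^ (p - 1) * max 1 D ^ (p * b), 2 ^ (p - 1) * (m⁻¹ * ∫ y in Ω, |u y|) ^ p,
    fun x hx => ?_⟩
  have hd : 0 < dB Ω x := hδ.trans_le (hδK x hx)
  have hpow : dB Ω x ^ (p * s x) ≤ max 1 D ^ (p * b) :=
    Real.rpow_le_max_one_rpow hd.le (hDK x hx) (mul_nonneg (by linarith) (hs₀ x))
      (mul_le_mul_of_nonneg_left (hsb x) (by linarith))
  have hvol : (volume (PsiB Ω x)).toReal⁻¹ ≤ m⁻¹ :=
    inv_anti₀ hm (volume_ball_le_volume_PsiB (hδK x hx))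
  have hI : 0 ≤ ∫ y in Ω, |u y| := integral_nonneg fun _ => abs_nonneg _
  calc |u x| ^ p ≤ 2 ^ (p - 1) * (nuInt Ω s p u x * dB Ω x ^ (p * s x) +
        ((volume (PsiB Ω x)).toReal⁻¹ * ∫ y in Ω, |u y|) ^ p) :=
      abs_rpow_le_nuInt_mul_add hp hu (hKΩ hx) hd
    _ ≤ 2 ^ (p - 1) * (nuInt Ω s p u x * max 1 D ^ (p * b) + (m⁻¹ * ∫ y in Ω, |u y|) ^ p) := by
      gcongr
      exact nuInt_nonneg
    _ = 2 ^ (p - 1) * max 1 D ^ (p * b) * nuInt Ω s p u x +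
        2 ^ (p - 1) * (m⁻¹ * ∫ y in Ω, |u y|) ^ p := by ring

theorem IsCompact.integrableOn_abs_rpow_of_memN (hK : IsCompact K) (hKΩ : K ⊆ Ω)
    (hΩ : IsOpen Ω) (hfr : (frontier Ω).Nonempty) (hp : 1 ≤ p) (hs₀ : ∀ x, 0 ≤ s x)
    (hsb : ∀ x, s x ≤ b) (hu : MemN Ω s p u) :
    IntegrableOn (fun x => |u x| ^ p) K := by
  obtain ⟨C, M, hCM⟩ := hK.exists_abs_rpow_le_nuInt hKΩ hΩ hfr hp hs₀ hsb hu.1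
  have hbound : IntegrableOn (fun x => C * nuInt Ω s p u x + M) K :=
    ((hu.2.mono_set hKΩ).const_mul C).add (integrableOn_const hK.measure_lt_top.ne)
  refine hbound.mono' ?_ ((ae_restrict_iff' hK.measurableSet).2 (.of_forall fun x hx => ?_))
  · exact Continuous.comp_aestronglyMeasurable
      ((Real.continuous_rpow_const (by linarith)).comp continuous_abs)
      (hu.1.mono_set hKΩ).aestronglyMeasurable
  · rw [Real.norm_eq_abs, abs_of_nonneg (by positivity)]
    exact hCM x hx

end Compact

theorem statement4_general (n : ℕ) (p : ℝ) (hp : 1 ≤ p)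
    (Ω : Set (Euc n)) (hΩo : IsOpen Ω) (hfr : (frontier Ω).Nonempty)
    (s : Euc n → ℝ) (hs0 : ∀ x, 0 ≤ s x) (hsb : ∃ b : ℝ, ∀ x, s x ≤ b)
    (u : Euc n → ℝ) (hu : MemN Ω s p u) :
    ∀ Ω' : Set (Euc n), IsOpen Ω' → IsCompact (closure Ω') → closure Ω' ⊆ Ω →
      IntegrableOn (fun x => |u x| ^ p) Ω' volume := by
  intro Ω' _ hK hKΩ
  obtain ⟨b, hb⟩ := hsb
  exact (hK.integrableOn_abs_rpow_of_memN hKΩ hΩo hfr hp hs0 hb hu).mono_set subset_closure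

/-- `𝒩^{s,p}(Ω) ⊆ Lᵖ_loc(Ω)`: every `u ∈ 𝒩^{s,p}(Ω)` is `p`-integrable on each
open set compactly contained in `Ω`. -/
theorem statement4 (n : ℕ) (hn : 1 ≤ n) (p : ℝ) (hp : 1 ≤ p)
    (Ω : Set (Euc n)) (hΩo : IsOpen Ω) (hΩne : Ω.Nonempty) (hfr : (frontier Ω).Nonempty)
    (s : Euc n → ℝ) (hsm : Measurable s) (hs0 : ∀ x, 0 ≤ s x) (hsb : ∃ b : ℝ, ∀ x, s x ≤ b)
    (u : Euc n → ℝ) (hu : MemN Ω s p u) :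
    ∀ Ω' : Set (Euc n), IsOpen Ω' → IsCompact (closure Ω') → closure Ω' ⊆ Ω →
      IntegrableOn (fun x => |u x| ^ p) Ω' volume :=
  statement4_general n p hp Ω hΩo hfr s hs0 hsb u hu
end
end

section
/- Assume (H1). Let x̄ ∈ Γ and 0 < δ ≤ δ_Γ, and put R₀ := sup_{x ∈ Q_{λ₀,δ}(x̄)} d(x). Then R₀ ≥ (η₀ λ₀ δ)^{θ_Γ(x̄)}, and there exists a constant c > 0 depending only on n such that, for each 0 < λ < λ₀, the Lebesgue measures satisfy |Q_{λ,δ}(x̄)| ≥ c (1 − λ/λ₀)^{n·θ_Γ(x̄)} R₀ⁿ and |Ω ∩ B(x̄,δ)| ≥ c R₀ⁿ. -/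
open MeasureTheory Metric Set Filter
open scoped ENNReal NNReal Topology

noncomputable section

variable {n : ℕ}

/-
The Lipschitz bound `d(z) ≥ d(x) - ‖x - z‖` shows that a point `x ∈ Q_{λ₀}(x̄)` with `d(x) = t`
drags a whole ball along: every `z` with `‖x - z‖ < (1 - λ/λ₀) t` and `‖x̄ - z‖ ≤ ‖x̄ - x‖` lies
in `Q_λ(x̄)`, because `(λ‖x̄ - z‖)^θ ≤ (λ/λ₀)^θ (λ₀‖x̄ - x‖)^θ ≤ (λ/λ₀) t`. Moving the centre
towards `x̄` fits a ball of radius `(1 - λ/λ₀) t / 2` into `Q_{λ,δ}(x̄)`, and choosing `x` with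
`t > R₀/2` gives the volume bounds with `c = |B(0,1)| / 4ⁿ`. The corkscrew point supplies
`R₀ ≥ (η₀ δ)^θ`.
-/

lemma exists_ball_subset_ball_inter_ball {E : Type*} [NormedAddCommGroup E] [NormedSpace ℝ E]
    {x y : E} {ρ : ℝ} (hρ : 0 < ρ) (hρxy : ρ ≤ dist y x) :
    ∃ z, ball z (ρ / 2) ⊆ ball x ρ ∩ ball y (dist y x) := by
  have hd : 0 < dist x y := dist_comm x y ▸ hρ.trans_le hρxy
  set c := ρ / (2 * dist x y)
  have hc0 : 0 ≤ c := by positivity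
  have hc1 : c ≤ 1 := by rw [div_le_one (by positivity)]; linarith [dist_comm x y]
  have hcd : c * dist x y = ρ / 2 := by simp only [c]; field_simp
  refine ⟨AffineMap.lineMap x y c, subset_inter (ball_subset_ball' ?_) (ball_subset_ball' ?_)⟩
  · rw [dist_lineMap_left, Real.norm_of_nonneg hc0, hcd]
    linarith
  · rw [dist_lineMap_right, Real.norm_of_nonneg (by linarith), dist_comm y x, sub_mul, one_mul,
      hcd]
    linarith

lemma ofReal_mul_pow_le_volume {A : Set (Euc n)} {y : Euc n} {r : ℝ} (hr : 0 < r)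
    (hA : ball y r ⊆ A) :
    ENNReal.ofReal ((volume (ball (0 : Euc n) 1)).toReal * r ^ n) ≤ volume A := by
  calc ENNReal.ofReal ((volume (ball (0 : Euc n) 1)).toReal * r ^ n)
      = volume (ball y r) := by
        rw [Measure.addHaar_ball_of_pos volume y hr, finrank_euclideanSpace_fin, mul_comm,
          ENNReal.ofReal_mul (by positivity), ENNReal.ofReal_toReal measure_ball_lt_top.ne]
    _ ≤ volume A := measure_mono hA

section BoundaryDistance

variable {Ω : Set (Euc n)} {xb x z : Euc n}

lemma dB_le_dist_of_mem_frontier (hxb : xb ∈ frontier Ω) (y : Euc n) : dB Ω y ≤ dist y xb :=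
  infDist_le_dist_of_mem hxb

lemma dB_le_dB_add_dist : dB Ω x ≤ dB Ω z + dist x z :=
  infDist_le_infDist_add_dist

lemma bddAbove_dB_image_inter_ball (hxb : xb ∈ frontier Ω) (E : Set (Euc n)) (δ : ℝ) :
    BddAbove (dB Ω '' (E ∩ ball xb δ)) := by
  refine ⟨δ, ?_⟩
  rintro _ ⟨y, ⟨-, hy⟩, rfl⟩
  exact (dB_le_dist_of_mem_frontier hxb y).trans (mem_ball.1 hy).le

lemma ball_dB_subset (hx : x ∈ Ω) : ball x (dB Ω x) ⊆ Ω := by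
  by_cases hΩ : Ω = univ
  · exact hΩ ▸ subset_univ _
  obtain ⟨y, hy, hxy⟩ := exists_mem_frontier_infDist_compl_eq_dist hx hΩ
  have : dB Ω x ≤ infDist x Ωᶜ := hxy ▸ infDist_le_dist_of_mem hy
  exact (ball_subset_ball this).trans ball_infDist_compl_subset

lemma ball_inter_ball_subset_Qreg {θ lam lam₀ : ℝ} (hθ : 1 ≤ θ) (hlam : 0 < lam)
    (hlam₀ : lam ≤ lam₀) (hx : x ∈ Qreg Ω lam₀ θ xb) :
    ball x ((1 - lam / lam₀) * dB Ω x) ∩ ball xb (dist xb x) ⊆ Qreg Ω lam θ xb := by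
  rintro z ⟨hxz, hz⟩
  rw [mem_ball'] at hxz hz
  have hlam₀' : 0 < lam₀ := hlam.trans_le hlam₀
  set u := lam / lam₀
  have hu0 : 0 ≤ u := by positivity
  have hu1 : u ≤ 1 := div_le_one_of_le₀ hlam₀ hlam₀'.le
  have hdBx : 0 ≤ dB Ω x := infDist_nonneg
  refine ⟨ball_dB_subset hx.1 (mem_ball'.2 (by nlinarith)), ?_⟩
  have hlam_eq : lam = u * lam₀ := (div_mul_cancel₀ lam hlam₀'.ne').symm
  calc (lam * dist xb z) ^ θ ≤ (u * (lam₀ * dist xb x)) ^ θ := by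
        refine Real.rpow_le_rpow (by positivity) ?_ (by linarith)
        rw [← mul_assoc, ← hlam_eq]
        gcongr
    _ = u ^ θ * (lam₀ * dist xb x) ^ θ := Real.mul_rpow hu0 (by positivity)
    _ ≤ u * dB Ω x :=
        mul_le_mul (Real.rpow_le_self_of_le_one hu0 hu1 hθ) hx.2.le (by positivity) hu0
    _ < dB Ω x - dist x z := by linarith
    _ ≤ dB Ω z := by linarith [dB_le_dB_add_dist (Ω := Ω) (x := x) (z := z)]

lemma le_sSup_dB_of_isCorkscrew {lam η θ δ₀ δ : ℝ} (hxb : xb ∈ frontier Ω)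
    (hQ : IsCorkscrew Ω (Qreg Ω lam θ xb) xb η θ δ₀) (hδ : 0 < δ) (hδ₀ : δ ≤ δ₀) :
    (η * δ) ^ θ ≤ sSup (dB Ω '' (Qreg Ω lam θ xb ∩ ball xb δ)) := by
  obtain ⟨x, hxQ, -, hxδ, hx⟩ := hQ δ hδ hδ₀
  exact hx.le.trans (le_csSup (bddAbove_dB_image_inter_ball hxb _ δ)
    ⟨x, ⟨hxQ, mem_ball'.2 hxδ⟩, rfl⟩)

lemma ofReal_mul_pow_le_volume_of_ball_dB_subset {A : Set (Euc n)} {s R : ℝ} (hxb : xb ∈ frontier Ω)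
    (hs : 0 < s) (hs1 : s ≤ 1) (hR : 0 < R) (hRx : R ≤ 2 * dB Ω x)
    (hA : ball x (s * dB Ω x) ∩ ball xb (dist xb x) ⊆ A) :
    ENNReal.ofReal ((volume (ball (0 : Euc n) 1)).toReal / 4 ^ n * s ^ n * R ^ n)
      ≤ volume A := by
  set t := dB Ω x
  have ht : 0 < t := by linarith
  have hρ : s * t ≤ dist xb x := by
    rw [dist_comm]
    nlinarith [dB_le_dist_of_mem_frontier hxb x]
  obtain ⟨y, hy⟩ := exists_ball_subset_ball_inter_ball (by positivity) hρ
  refine le_trans (ENNReal.ofReal_le_ofReal ?_)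
    (ofReal_mul_pow_le_volume (by positivity : 0 < s * t / 2) (hy.trans hA))
  calc (volume (ball (0 : Euc n) 1)).toReal / 4 ^ n * s ^ n * R ^ n
      = (volume (ball (0 : Euc n) 1)).toReal * (s * R / 4) ^ n := by
        rw [div_pow, mul_pow]; ring
    _ ≤ (volume (ball (0 : Euc n) 1)).toReal * (s * t / 2) ^ n := by
        gcongr _ * ?_
        exact pow_le_pow_left₀ (by positivity) (by nlinarith) n

end BoundaryDistance

theorem statement5_general (n : ℕ) :
    ∃ c : ℝ, 0 < c ∧
      ∀ (Ω : Set (Euc n)), IsOpen Ω → Ω.Nonempty → (frontier Ω).Nonempty →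
      ∀ (Γ : Set (Euc n)), Γ ⊆ frontier Ω →
      ∀ (δΓ : ℝ), 0 < δΓ → δΓ < 1 →
      ∀ (θΓ : Euc n → ℝ), (∀ xb, 1 ≤ θΓ xb) → (∃ b : ℝ, ∀ xb, θΓ xb ≤ b) →
      ∀ (lam₀ η₀ : ℝ), 0 < lam₀ → lam₀ < 1 → 0 < η₀ → η₀ < 1 →
      (∀ xb ∈ Γ, IsCorkscrew Ω (Qreg Ω lam₀ (θΓ xb) xb) xb η₀ (θΓ xb) δΓ) →
      ∀ xb ∈ Γ, ∀ δ : ℝ, 0 < δ → δ ≤ δΓ →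
        (η₀ * lam₀ * δ) ^ θΓ xb ≤ sSup (dB Ω '' (Qreg Ω lam₀ (θΓ xb) xb ∩ ball xb δ)) ∧
        ∀ lam : ℝ, 0 < lam → lam < lam₀ →
          ENNReal.ofReal (c * (1 - lam / lam₀) ^ ((n : ℝ) * θΓ xb) *
              sSup (dB Ω '' (Qreg Ω lam₀ (θΓ xb) xb ∩ ball xb δ)) ^ n)
            ≤ volume (Qreg Ω lam (θΓ xb) xb ∩ ball xb δ) ∧
          ENNReal.ofReal (c * sSup (dB Ω '' (Qreg Ω lam₀ (θΓ xb) xb ∩ ball xb δ)) ^ n)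
            ≤ volume (Ω ∩ ball xb δ) := by
  have hV : 0 < (volume (ball (0 : Euc n) 1)).toReal :=
    ENNReal.toReal_pos (measure_ball_pos volume 0 one_pos).ne' measure_ball_lt_top.ne
  refine ⟨(volume (ball (0 : Euc n) 1)).toReal / 4 ^ n, by positivity, ?_⟩
  intro Ω _ _ _ Γ hΓ δΓ _ _ θΓ hθ _ lam₀ η₀ hlam₀ hlam₀1 hη₀ _ hQ xb hxb δ hδ hδΓ
  have hxbF := hΓ hxb
  have hR₀ : (η₀ * lam₀ * δ) ^ θΓ xb ≤ sSup (dB Ω '' (Qreg Ω lam₀ (θΓ xb) xb ∩ ball xb δ)) :=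
    (Real.rpow_le_rpow (by positivity) (by nlinarith [mul_pos hη₀ hδ]) (by linarith [hθ xb]))
      |>.trans (le_sSup_dB_of_isCorkscrew hxbF (hQ xb hxb) hδ hδΓ)
  refine ⟨hR₀, fun lam hlam hlamlt => ?_⟩
  have hR₀pos := (Real.rpow_pos_of_pos (by positivity) _).trans_le hR₀
  obtain ⟨_, ⟨x, ⟨hxQ, hxδ⟩, rfl⟩, hx⟩ := exists_lt_of_lt_csSup
    (nonempty_iff_ne_empty.2 fun h => by simp [h] at hR₀pos) (half_lt_self hR₀pos)
  have hball := ball_subset_ball (x := xb) (mem_ball'.1 hxδ).le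
  have hs : 0 < 1 - lam / lam₀ := sub_pos.2 ((div_lt_one hlam₀).2 hlamlt)
  have hs1 : 1 - lam / lam₀ ≤ 1 := sub_le_self _ (div_pos hlam hlam₀).le
  constructor
  · refine le_trans (ENNReal.ofReal_le_ofReal ?_)
      (ofReal_mul_pow_le_volume_of_ball_dB_subset hxbF hs hs1 hR₀pos (by linarith)
        (subset_inter (ball_inter_ball_subset_Qreg (hθ xb) hlam hlamlt.le hxQ)
          (inter_subset_right.trans hball)))
    gcongr _ * ?_ * _
    rw [← Real.rpow_natCast]
    exact Real.rpow_le_rpow_of_exponent_ge hs hs1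
      (le_mul_of_one_le_right n.cast_nonneg (hθ xb))
  · simpa using ofReal_mul_pow_le_volume_of_ball_dB_subset hxbF one_pos le_rfl hR₀pos
      (by linarith) (inter_subset_inter (by rw [one_mul]; exact ball_dB_subset hxQ.1) hball)

/-- Under the corkscrew hypothesis (H1), with
`R₀ := sup_{x ∈ Q_{λ₀,δ}(xb)} d(x)`, one has `R₀ ≥ (η₀λ₀δ)^{θ_Γ(xb)}` and lower volume bounds
`|Q_{λ,δ}(xb)| ≥ c (1 − λ/λ₀)^{nθ_Γ(xb)} R₀ⁿ` and `|Ω ∩ B(xb,δ)| ≥ c R₀ⁿ`, with `c = c(n) > 0`. -/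
theorem statement5 (n : ℕ) (hn : 1 ≤ n) :
    ∃ c : ℝ, 0 < c ∧
      ∀ (Ω : Set (Euc n)), IsOpen Ω → Ω.Nonempty → (frontier Ω).Nonempty →
      ∀ (Γ : Set (Euc n)), Γ ⊆ frontier Ω →
      ∀ (δΓ : ℝ), 0 < δΓ → δΓ < 1 →
      ∀ (θΓ : Euc n → ℝ), (∀ xb, 1 ≤ θΓ xb) → (∃ b : ℝ, ∀ xb, θΓ xb ≤ b) →
      ∀ (lam₀ η₀ : ℝ), 0 < lam₀ → lam₀ < 1 → 0 < η₀ → η₀ < 1 →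
      (∀ xb ∈ Γ, IsCorkscrew Ω (Qreg Ω lam₀ (θΓ xb) xb) xb η₀ (θΓ xb) δΓ) →
      ∀ xb ∈ Γ, ∀ δ : ℝ, 0 < δ → δ ≤ δΓ →
        (η₀ * lam₀ * δ) ^ θΓ xb ≤ sSup (dB Ω '' (Qreg Ω lam₀ (θΓ xb) xb ∩ ball xb δ)) ∧
        ∀ lam : ℝ, 0 < lam → lam < lam₀ →
          ENNReal.ofReal (c * (1 - lam / lam₀) ^ ((n : ℝ) * θΓ xb) *
              sSup (dB Ω '' (Qreg Ω lam₀ (θΓ xb) xb ∩ ball xb δ)) ^ n)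
            ≤ volume (Qreg Ω lam (θΓ xb) xb ∩ ball xb δ) ∧
          ENNReal.ofReal (c * sSup (dB Ω '' (Qreg Ω lam₀ (θΓ xb) xb ∩ ball xb δ)) ^ n)
            ≤ volume (Ω ∩ ball xb δ) :=
  statement5_general n
end
end
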